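/- arXiv:2007.14802 — 9 statements merged into one kernel-verified Lean document; each statement's English description precedes it below -/
import Mathlib

section
/- The modified Barenblatt density profile verifies the porous media equation with time-dependent dissipation: if ρ̄(x,t) = (1+t)^{-(1+λ)/(γ+1)} [A − B(1+t)^{-2(1+λ)/(γ+1)} x²]^{1/(γ-1)} with B = μ(1+λ)(γ−1)/(2(γ+1)), then ∂_t ρ̄ = ((1+t)^λ/μ) ∂_x² (ρ̄^γ/γ) wherever A − B(1+t)^{-2(1+λ)/(γ+1)} x² > 0. -/
/-!
The profile is self-similar: with `τ = 1 + t` and `α = (1 + λ)/(γ + 1)`,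
`ρ̄(x, t) = τ^(-α) F(τ^(-α) x)` where `F ξ = (A - B ξ²)^(1/(γ-1))`.
Differentiating the dilation in time gives `∂ₜρ̄ = -α τ^(-α-1) (ξ F)'(ξ)` at `ξ = τ^(-α) x`.
On the other side, `F^(γ-1) = A - B ξ²` turns the pressure gradient of the profile into
`(F^γ/γ)' = -(2B/(γ-1)) ξ F`, so `∂ₓ²(ρ̄^γ/γ) = -(2B/(γ-1)) τ^(-α(γ+2)) (ξ F)'(ξ)`.
The two agree after multiplying by `τ^λ/μ` because `2B/(γ-1) = μα` and `λ - α(γ+2) = -α-1`.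
-/

open Real Filter Topology

section Calculus

variable {𝕜 : Type*} [NontriviallyNormedField 𝕜]

theorem hasDerivAt_mul_comp_mul {a F : 𝕜 → 𝕜} {a' s : 𝕜} (x : 𝕜) (ha : HasDerivAt a a' s)
    (hF : DifferentiableAt 𝕜 F (a s * x)) :
    HasDerivAt (fun s => a s * F (a s * x)) (a' * deriv (fun η => η * F η) (a s * x)) s := by
  have hH : HasDerivAt (fun η => η * F η) (1 * F (a s * x) + a s * x * deriv F (a s * x))
      (a s * x) := (hasDerivAt_id _).mul hF.hasDerivAt
  rw [hH.deriv]
  have hcomp : HasDerivAt (fun s => F (a s * x)) (deriv F (a s * x) * (a' * x)) s :=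
    hF.hasDerivAt.comp s (ha.mul_const x)
  exact (ha.mul hcomp).congr_deriv (by ring)

theorem deriv_deriv_const_mul_comp_mul (k c : 𝕜) (f : 𝕜 → 𝕜) (x : 𝕜) :
    deriv (deriv fun z => k * f (c * z)) x = k * c ^ 2 * deriv (deriv f) (c * x) := by
  have h : ∀ g : 𝕜 → 𝕜, deriv (fun z => g (c * z)) = fun z => c * deriv g (c * z) := fun g =>
    funext fun z => by simpa using deriv_comp_mul_left c g z
  simp only [deriv_const_mul_field', h]
  ring

end Calculus

theorem sub_mul_rpow_two_mul_sq {τ : ℝ} (hτ : 0 < τ) (A B c x : ℝ) :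
    A - B * τ ^ (2 * c) * x ^ 2 = A - B * (τ ^ c * x) ^ 2 := by
  rw [mul_comm 2 c, rpow_mul hτ.le, rpow_two]
  ring

theorem rpow_mul_rpow_neg_mul_rpow_neg {τ α γ lam : ℝ} (hτ : 0 < τ) (h : α * (γ + 1) = 1 + lam) :
    τ ^ lam * (τ ^ (-α)) ^ γ * (τ ^ (-α)) ^ 2 = τ ^ (-α - 1) := by
  rw [← rpow_natCast, ← rpow_mul hτ.le, ← rpow_mul hτ.le, ← rpow_add hτ, ← rpow_add hτ]
  congr 1
  push_cast
  linarith

noncomputable def barenblattProfile (A B γ ξ : ℝ) : ℝ := (A - B * ξ ^ 2) ^ (1 / (γ - 1))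

section Profile

variable {A B γ ξ : ℝ}

theorem differentiableAt_barenblattProfile (hξ : 0 < A - B * ξ ^ 2) :
    DifferentiableAt ℝ (barenblattProfile A B γ) ξ := by
  unfold barenblattProfile
  fun_prop (disch := exact Or.inl hξ.ne')

theorem hasDerivAt_pressure_barenblattProfile (hγ : 1 < γ) (hξ : 0 < A - B * ξ ^ 2) :
    HasDerivAt (fun η => barenblattProfile A B γ η ^ γ / γ)
      (-(2 * B / (γ - 1)) * (ξ * barenblattProfile A B γ ξ)) ξ := by
  have hU : IsOpen {η : ℝ | 0 < A - B * η ^ 2} := isOpen_lt continuous_const (by fun_prop)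
  have hG : HasDerivAt (fun η => A - B * η ^ 2) (-(B * (2 * ξ))) ξ := by
    simpa using ((hasDerivAt_pow 2 ξ).const_mul B).const_sub A
  have hexp : 1 / (γ - 1) * γ - 1 = 1 / (γ - 1) := by
    field_simp [(by linarith : γ - 1 ≠ 0)]
    ring
  have heq : (fun η => barenblattProfile A B γ η ^ γ / γ)
      =ᶠ[𝓝 ξ] fun η => (A - B * η ^ 2) ^ (1 / (γ - 1) * γ) / γ := by
    filter_upwards [hU.mem_nhds hξ] with η hη
    rw [barenblattProfile, ← rpow_mul hη.le]
  refine ((hG.rpow_const (Or.inl hξ.ne')).div_const γ).congr_of_eventuallyEq heq |>.congr_deriv ?_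
  rw [hexp, barenblattProfile]
  field_simp [(by linarith : γ - 1 ≠ 0), (by linarith : γ ≠ 0)]

theorem deriv_deriv_pressure_barenblattProfile (hγ : 1 < γ) (hξ : 0 < A - B * ξ ^ 2) :
    deriv (deriv fun η => barenblattProfile A B γ η ^ γ / γ) ξ
      = -(2 * B / (γ - 1)) * deriv (fun η => η * barenblattProfile A B γ η) ξ := by
  have hU : IsOpen {η : ℝ | 0 < A - B * η ^ 2} := isOpen_lt continuous_const (by fun_prop)
  have heq : deriv (fun η => barenblattProfile A B γ η ^ γ / γ)
      =ᶠ[𝓝 ξ] fun η => -(2 * B / (γ - 1)) * (η * barenblattProfile A B γ η) := by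
    filter_upwards [hU.mem_nhds hξ] with η hη
    exact (hasDerivAt_pressure_barenblattProfile hγ hη).deriv
  rw [heq.deriv_eq, deriv_const_mul_field']

end Profile

noncomputable def barenblatt (A B γ α x t : ℝ) : ℝ :=
  (1 + t) ^ (-α) * barenblattProfile A B γ ((1 + t) ^ (-α) * x)

section Barenblatt

variable {A B γ α x t : ℝ}

theorem hasDerivAt_barenblatt_time (ht : 0 < 1 + t)
    (hx : 0 < A - B * ((1 + t) ^ (-α) * x) ^ 2) :
    HasDerivAt (barenblatt A B γ α x) (-α * (1 + t) ^ (-α - 1) *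
      deriv (fun η => η * barenblattProfile A B γ η) ((1 + t) ^ (-α) * x)) t := by
  have ha : HasDerivAt (fun s => (1 + s) ^ (-α)) (-α * (1 + t) ^ (-α - 1)) t := by
    simpa using ((hasDerivAt_id t).const_add 1).rpow_const (p := -α) (Or.inl ht.ne')
  exact hasDerivAt_mul_comp_mul x ha (differentiableAt_barenblattProfile hx)

theorem deriv_deriv_pressure_barenblatt (hγ : 1 < γ) (ht : 0 < 1 + t)
    (hx : 0 < A - B * ((1 + t) ^ (-α) * x) ^ 2) :
    deriv (deriv fun z => barenblatt A B γ α z t ^ γ / γ) x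
      = ((1 + t) ^ (-α)) ^ γ * ((1 + t) ^ (-α)) ^ 2 * (-(2 * B / (γ - 1)) *
          deriv (fun η => η * barenblattProfile A B γ η) ((1 + t) ^ (-α) * x)) := by
  have hU : IsOpen {z : ℝ | 0 < A - B * ((1 + t) ^ (-α) * z) ^ 2} :=
    isOpen_lt continuous_const (by fun_prop)
  have heq : (fun z => barenblatt A B γ α z t ^ γ / γ) =ᶠ[𝓝 x] fun z =>
      ((1 + t) ^ (-α)) ^ γ * (barenblattProfile A B γ ((1 + t) ^ (-α) * z) ^ γ / γ) := by
    filter_upwards [hU.mem_nhds hx] with z hz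
    have hF : 0 ≤ barenblattProfile A B γ ((1 + t) ^ (-α) * z) := rpow_nonneg hz.le _
    rw [barenblatt, mul_rpow (rpow_pos_of_pos ht _).le hF]
    ring
  rw [heq.deriv.deriv_eq,
    deriv_deriv_const_mul_comp_mul _ _ (fun η => barenblattProfile A B γ η ^ γ / γ),
    deriv_deriv_pressure_barenblattProfile hγ hx]

theorem barenblatt_eq {lam : ℝ} (ht : 0 < 1 + t) :
    (1 + t) ^ (-(1 + lam) / (γ + 1)) *
        (A - B * (1 + t) ^ (-(2 * (1 + lam)) / (γ + 1)) * x ^ 2) ^ (1 / (γ - 1))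
      = barenblatt A B γ ((1 + lam) / (γ + 1)) x t := by
  rw [neg_div, show -(2 * (1 + lam)) / (γ + 1) = 2 * -((1 + lam) / (γ + 1)) by ring,
    sub_mul_rpow_two_mul_sq ht]
  rfl

end Barenblatt

theorem stmt_0_general (γ lam μ A B : ℝ) (hγ : 1 < γ) (hμ : 0 < μ)
    (hB : B = μ * (1 + lam) * (γ - 1) / (2 * (γ + 1)))
    (ρ : ℝ → ℝ → ℝ)
    (hρ : ∀ x t : ℝ, ρ x t =
      (1 + t) ^ (-(1 + lam) / (γ + 1)) *
        (A - B * (1 + t) ^ (-(2 * (1 + lam)) / (γ + 1)) * x ^ 2) ^ (1 / (γ - 1))) :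
    ∀ x t : ℝ, 0 ≤ t →
      0 < A - B * (1 + t) ^ (-(2 * (1 + lam)) / (γ + 1)) * x ^ 2 →
      deriv (fun s => ρ x s) t =
        ((1 + t) ^ lam / μ) *
          deriv (fun y => deriv (fun z => (ρ z t) ^ γ / γ) y) x := by
  intro x t ht hx
  set α := (1 + lam) / (γ + 1) with hα
  have hτ : 0 < 1 + t := by linarith
  have hρ_time : (fun s => ρ x s) =ᶠ[𝓝 t] barenblatt A B γ α x := by
    filter_upwards [lt_mem_nhds (by linarith : (-1 : ℝ) < t)] with s hs
    rw [hρ, barenblatt_eq (by linarith)]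
  have hρ_space : ∀ z, ρ z t = barenblatt A B γ α z t := fun z => by
    rw [hρ, barenblatt_eq hτ]
  rw [show -(2 * (1 + lam)) / (γ + 1) = 2 * -α by ring, sub_mul_rpow_two_mul_sq hτ] at hx
  have hBα : 2 * B / (γ - 1) = μ * α := by
    rw [hB, hα]
    field_simp [(by linarith : γ - 1 ≠ 0)]
  simp only [hρ_space]
  rw [hρ_time.deriv_eq, (hasDerivAt_barenblatt_time hτ hx).deriv,
    deriv_deriv_pressure_barenblatt hγ hτ hx, hBα,
    ← rpow_mul_rpow_neg_mul_rpow_neg hτ (div_mul_cancel₀ _ (by linarith : γ + 1 ≠ 0)),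
    div_mul_eq_mul_div, eq_div_iff hμ.ne']
  ring

/-- The modified Barenblatt density profile solves the porous media equation
with time-dependent dissipation wherever the bracket is positive. -/
theorem stmt_0 (γ lam μ A B : ℝ) (hγ : 1 < γ) (hlam0 : 0 < lam) (hlam1 : lam ≤ 1)
    (hμ : 0 < μ) (hA : 0 < A)
    (hB : B = μ * (1 + lam) * (γ - 1) / (2 * (γ + 1)))
    (ρ : ℝ → ℝ → ℝ)
    (hρ : ∀ x t : ℝ, ρ x t =
      (1 + t) ^ (-(1 + lam) / (γ + 1)) *
        (A - B * (1 + t) ^ (-(2 * (1 + lam)) / (γ + 1)) * x ^ 2) ^ (1 / (γ - 1))) :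
    ∀ x t : ℝ, 0 ≤ t →
      0 < A - B * (1 + t) ^ (-(2 * (1 + lam)) / (γ + 1)) * x ^ 2 →
      deriv (fun s => ρ x s) t =
        ((1 + t) ^ lam / μ) *
          deriv (fun y => deriv (fun z => (ρ z t) ^ γ / γ) y) x :=
  stmt_0_general γ lam μ A B hγ hμ hB ρ hρ
end

section
/- For η̄_x(t) = (1+t)^{(λ+1)/(γ+1)}, the function η̄(x,t) = x η̄_x(t) satisfies the exact relation (μ/(1+t)^λ) ρ̄₀(x) ∂_t η̄(x,t) + (1/γ) ∂_x [ ρ̄₀(x)^γ / η̄_x(t)^γ ] = 0 for all x with σ(x) = A − Bx² > 0, where ρ̄₀(x) = σ(x)^{1/(γ−1)} and B = μ(1+λ)(γ−1)/(2(γ+1)). -/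
open Real Filter Topology

/-
The Lagrangian map is self-similar, so both terms factor as (function of x) × (power of 1 + t).
With ρ̄₀^γ = σ^{γ/(γ-1)} one has ∂_x ρ̄₀^γ = (γ/(γ-1)) σ' ρ̄₀ = -(2Bγ/(γ-1)) x ρ̄₀, while
∂_t η̄ = x α (1+t)^{α-1} with α = (λ+1)/(γ+1). The powers of 1 + t match because
(α - 1) + αγ = λ, and the x-dependent parts cancel by the choice of B.
-/

lemma hasDerivAt_one_add_rpow (α : ℝ) {t : ℝ} (ht : 0 < 1 + t) :
    HasDerivAt (fun s => (1 + s) ^ α) (α * (1 + t) ^ (α - 1)) t := by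
  simpa using ((hasDerivAt_id t).const_add 1).rpow_const (p := α) (Or.inl ht.ne')

lemma HasDerivAt.rpow_const_rpow_const {f : ℝ → ℝ} {f' x : ℝ} (p q : ℝ)
    (hf : HasDerivAt f f' x) (hx : 0 < f x) :
    HasDerivAt (fun y => (f y ^ p) ^ q) (f' * (p * q) * f x ^ (p * q - 1)) x := by
  have hpos : ∀ᶠ y in 𝓝 x, 0 < f y := hf.continuousAt.eventually (lt_mem_nhds hx)
  refine (hf.rpow_const (p := p * q) (Or.inl hx.ne')).congr_of_eventuallyEq ?_
  filter_upwards [hpos] with y hy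
  rw [← rpow_mul hy.le]

lemma rpow_sub_one_mul_rpow_mul {u : ℝ} (hu : 0 < u) {α γ lam : ℝ}
    (hα : α * (γ + 1) = lam + 1) :
    u ^ (α - 1) * u ^ (α * γ) = u ^ lam := by
  rw [← rpow_add hu]
  congr 1
  linear_combination hα

theorem stmt_2_general (γ lam μ A B : ℝ) (hγ : 1 < γ)
    (hB : B = μ * (1 + lam) * (γ - 1) / (2 * (γ + 1)))
    (σ ρ₀ : ℝ → ℝ) (η : ℝ → ℝ → ℝ) (ηx : ℝ → ℝ)
    (hσ : ∀ x, σ x = A - B * x ^ 2)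
    (hρ₀ : ∀ x, ρ₀ x = σ x ^ (1 / (γ - 1)))
    (hηx : ∀ t, ηx t = (1 + t) ^ ((lam + 1) / (γ + 1)))
    (hη : ∀ x t : ℝ, η x t = x * ηx t) :
    ∀ x t : ℝ, 0 ≤ t → 0 < σ x →
      (μ / (1 + t) ^ lam) * ρ₀ x * deriv (fun s => η x s) t +
        (1 / γ) * deriv (fun y => ρ₀ y ^ γ / ηx t ^ γ) x = 0 := by
  intro x t ht hσx
  have hu : 0 < 1 + t := by linarith
  have hγ₁ : γ - 1 ≠ 0 := by linarith
  have hγ₀ : γ ≠ 0 := by linarith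
  set α := (lam + 1) / (γ + 1)
  have hσ' : HasDerivAt σ (-(2 * B * x)) x := by
    rw [show σ = fun y => A - B * y ^ 2 from funext hσ]
    exact (((hasDerivAt_pow 2 x).const_mul B).const_sub A).congr_deriv (by push_cast; ring)
  have hexp : 1 / (γ - 1) * γ - 1 = 1 / (γ - 1) := by field_simp; ring
  have hdt : deriv (fun s => η x s) t = x * (α * (1 + t) ^ (α - 1)) := by
    simp only [hη, hηx]
    exact ((hasDerivAt_one_add_rpow α hu).const_mul x).deriv
  have hdx : deriv (fun y => ρ₀ y ^ γ / ηx t ^ γ) x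
      = -(2 * B * x) * (1 / (γ - 1) * γ) * ρ₀ x / (1 + t) ^ (α * γ) := by
    have h := (hσ'.rpow_const_rpow_const (1 / (γ - 1)) γ hσx).div_const ((1 + t) ^ (α * γ))
    rw [hexp] at h
    rw [hηx, ← rpow_mul hu.le, show ρ₀ = fun y => σ y ^ (1 / (γ - 1)) from funext hρ₀]
    exact h.deriv
  have hα : α * (γ + 1) = lam + 1 := div_mul_cancel₀ _ (by linarith)
  rw [hdt, hdx, ← rpow_sub_one_mul_rpow_mul hu hα, hB]
  clear_value α
  field_simp
  linear_combination μ * ρ₀ x * x * hα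

/-- The modified Barenblatt Lagrangian map satisfies the exact relation
(μ/(1+t)^λ) ρ̄₀ ∂_t η̄ + (1/γ) ∂_x (ρ̄₀^γ / η̄_x^γ) = 0 on {σ > 0}. -/
theorem stmt_2 (γ lam μ A B : ℝ) (hγ : 1 < γ) (hlam : 0 < lam) (hμ : 0 < μ) (hA : 0 < A)
    (hB : B = μ * (1 + lam) * (γ - 1) / (2 * (γ + 1)))
    (σ ρ₀ : ℝ → ℝ) (η : ℝ → ℝ → ℝ) (ηx : ℝ → ℝ)
    (hσ : ∀ x, σ x = A - B * x ^ 2)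
    (hρ₀ : ∀ x, ρ₀ x = σ x ^ (1 / (γ - 1)))
    (hηx : ∀ t, ηx t = (1 + t) ^ ((lam + 1) / (γ + 1)))
    (hη : ∀ x t : ℝ, η x t = x * ηx t) :
    ∀ x t : ℝ, 0 ≤ t → 0 < σ x →
      (μ / (1 + t) ^ lam) * ρ₀ x * deriv (fun s => η x s) t +
        (1 / γ) * deriv (fun y => ρ₀ y ^ γ / ηx t ^ γ) x = 0 :=
  stmt_2_general γ lam μ A B hγ hB σ ρ₀ η ηx hσ hρ₀ hηx hη
end

section
/- Monotonicity and growth of the corrected stretch factor: with η̃_x(t) = η̄_x(t) + h(t) as above (0 ≤ h(t) ≤ C), one has η̃_x t'(t) ≥ 0 whenever expressed via the integral formula, and there exists K ≥ 1 such that (1+t)^{(λ+1)/(γ+1)} ≤ η̃_x(t) ≤ K(1+t)^{(λ+1)/(γ+1)} for all t ≥ 0. -/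
open Real Set Filter Topology

/-! With `v = η̃'` and `p t = μ / (1 + t) ^ λ`, the equation for `h` reads
`v' + p v = μ (λ + 1) / (γ + 1) · η̃ ^ (-γ) ≥ 0`, so `exp (∫₀ᵗ p) · v` is nondecreasing on `[0, ∞)`.
As `v 0 = η̄_x' 0 ≥ 0`, the derivative `v` stays nonnegative. The two-sided bound only uses
`1 ≤ η̄_x` and `0 ≤ h ≤ C`. -/

theorem nonneg_of_deriv_add_mul_nonneg {p v v' : ℝ → ℝ} (hp : ContinuousOn p (Ici 0))
    (hv : ContinuousOn v (Ici 0)) (hv' : ∀ t, 0 < t → HasDerivAt v (v' t) t)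
    (hineq : ∀ t, 0 < t → 0 ≤ v' t + p t * v t) (h0 : 0 ≤ v 0) {T : ℝ} (hT : 0 ≤ T) :
    0 ≤ v T := by
  set F : ℝ → ℝ := fun t => ∫ s in (0 : ℝ)..t, p s
  have hF : ContinuousOn F (Icc 0 T) := by
    rw [← uIcc_of_le hT]
    exact intervalIntegral.continuousOn_primitive_interval
      (by rw [uIcc_of_le hT]; exact (hp.mono Icc_subset_Ici_self).integrableOn_Icc)
  have hF' : ∀ t, 0 < t → HasDerivAt F (p t) t := fun t ht =>
    intervalIntegral.integral_hasDerivAt_right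
      ((hp.mono (by rw [uIcc_of_le ht.le]; exact Icc_subset_Ici_self)).intervalIntegrable)
      ((hp.mono Ioi_subset_Ici_self).stronglyMeasurableAtFilter isOpen_Ioi t ht)
      (hp.continuousAt (Ici_mem_nhds ht))
  have hw' : ∀ t, 0 < t → HasDerivAt (fun s => exp (F s) * v s)
      (exp (F t) * (v' t + p t * v t)) t := fun t ht =>
    ((hF' t ht).exp.mul (hv' t ht)).congr_deriv (by ring)
  have hmono : MonotoneOn (fun s => exp (F s) * v s) (Icc 0 T) := by
    refine monotoneOn_of_deriv_nonneg (convex_Icc 0 T)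
      (hF.rexp.mul (hv.mono Icc_subset_Ici_self)) (fun t ht => ?_) (fun t ht => ?_)
    all_goals rw [interior_Icc] at ht
    · exact (hw' t ht.1).differentiableAt.differentiableWithinAt
    · rw [(hw' t ht.1).deriv]; exact mul_nonneg (exp_pos _).le (hineq t ht.1)
  have := hmono ⟨le_rfl, hT⟩ ⟨hT, le_rfl⟩ hT
  simp only [F, intervalIntegral.integral_same, exp_zero, one_mul] at this
  exact (mul_nonneg_iff_of_pos_left (exp_pos _)).mp (h0.trans this)

theorem contDiffOn_one_add_rpow (α : ℝ) {n : WithTop ℕ∞} :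
    ContDiffOn ℝ n (fun s : ℝ => (1 + s) ^ α) (Ioi (-1)) :=
  (contDiffOn_const.add contDiffOn_id).rpow_const_of_ne fun s hs => by
    simp only [id]; linarith [mem_Ioi.mp hs]

theorem deriv_one_add_rpow (α : ℝ) {t : ℝ} (ht : -1 < t) :
    deriv (fun s : ℝ => (1 + s) ^ α) t = α * (1 + t) ^ (α - 1) := by
  rw [deriv_rpow_const (by fun_prop) (Or.inl (by linarith))]
  simp

section TwiceDifferentiable

variable {f g : ℝ → ℝ} {s : Set ℝ} {x : ℝ}

theorem ContDiffOn.differentiableAt_of_isOpen (hf : ContDiffOn ℝ 2 f s) (hs : IsOpen s)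
    (hx : x ∈ s) : DifferentiableAt ℝ f x :=
  (hf.differentiableOn (by norm_num) x hx).differentiableAt (hs.mem_nhds hx)

theorem ContDiffOn.differentiableAt_deriv (hf : ContDiffOn ℝ 2 f s) (hs : IsOpen s)
    (hx : x ∈ s) : DifferentiableAt ℝ (deriv f) x :=
  (((hf.deriv_of_isOpen hs (by norm_num)) : ContDiffOn ℝ 1 (deriv f) s).differentiableOn
    one_ne_zero x hx).differentiableAt (hs.mem_nhds hx)

theorem ContDiffOn.deriv_add (hf : ContDiffOn ℝ 2 f s) (hg : ContDiffOn ℝ 2 g s) (hs : IsOpen s)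
    (hx : x ∈ s) : deriv (fun y => f y + g y) x = deriv f x + deriv g x :=
  deriv_fun_add (hf.differentiableAt_of_isOpen hs hx) (hg.differentiableAt_of_isOpen hs hx)

theorem ContDiffOn.hasDerivAt_deriv_add (hf : ContDiffOn ℝ 2 f s) (hg : ContDiffOn ℝ 2 g s)
    (hs : IsOpen s) (hx : x ∈ s) :
    HasDerivAt (deriv fun y => f y + g y) (deriv (deriv f) x + deriv (deriv g) x) x := by
  refine ((hf.differentiableAt_deriv hs hx).hasDerivAt.add
    (hg.differentiableAt_deriv hs hx).hasDerivAt).congr_of_eventuallyEq ?_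
  filter_upwards [hs.mem_nhds hx] with y hy
  exact hf.deriv_add hg hs hy

end TwiceDifferentiable

theorem continuousOn_div_one_add_rpow (μ lam : ℝ) :
    ContinuousOn (fun s : ℝ => μ / (1 + s) ^ lam) (Ioi (-1)) := fun s hs => by
  have hs' : 0 < 1 + s := by linarith [mem_Ioi.mp hs]
  exact (continuousAt_const.div ((continuousAt_const.add continuousAt_id).rpow_const
    (Or.inl hs'.ne')) (rpow_pos_of_pos hs' _).ne').continuousWithinAt

theorem le_add_and_add_le_mul {x y C : ℝ} (hx : 1 ≤ x) (hy : 0 ≤ y) (hyC : y ≤ C) :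
    x ≤ x + y ∧ x + y ≤ (max C 0 + 1) * x :=
  ⟨by linarith, by nlinarith [le_max_left C 0, le_max_right C 0]⟩

theorem stmt_6_general (γ lam μ C : ℝ) (hγ : 1 < γ) (hlam0 : 0 < lam) (hμ : 0 < μ)
    (ηx : ℝ → ℝ) (hηx : ∀ t, ηx t = (1 + t) ^ ((lam + 1) / (γ + 1)))
    (h : ℝ → ℝ) (hsmooth : ContDiff ℝ 2 h)
    (hbd : ∀ t : ℝ, 0 ≤ t → 0 ≤ h t ∧ h t ≤ C)
    (hode : ∀ t : ℝ, 0 ≤ t →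
      deriv (deriv h) t + (μ / (1 + t) ^ lam) * deriv h t
        - (μ * (lam + 1) / (γ + 1)) * (ηx t + h t) ^ (-γ)
        + deriv (deriv ηx) t + (μ / (1 + t) ^ lam) * deriv ηx t = 0)
    (h0' : deriv h 0 = 0) :
    (∀ t : ℝ, 0 ≤ t → 0 ≤ deriv (fun s => ηx s + h s) t) ∧
    ∃ K : ℝ, 1 ≤ K ∧ ∀ t : ℝ, 0 ≤ t →
      (1 + t) ^ ((lam + 1) / (γ + 1)) ≤ ηx t + h t ∧
      ηx t + h t ≤ K * (1 + t) ^ ((lam + 1) / (γ + 1)) := by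
  set α := (lam + 1) / (γ + 1)
  have hα : 0 ≤ α := div_nonneg (by linarith) (by linarith)
  have hηx2 : ContDiffOn ℝ 2 ηx (Ioi (-1)) := by
    rw [funext hηx]; exact contDiffOn_one_add_rpow α
  have hh2 : ContDiffOn ℝ 2 h (Ioi (-1)) := hsmooth.contDiffOn
  have hderiv2 : ∀ t, 0 ≤ t → HasDerivAt (deriv fun s => ηx s + h s)
      (deriv (deriv ηx) t + deriv (deriv h) t) t := fun t ht =>
    hηx2.hasDerivAt_deriv_add hh2 isOpen_Ioi (mem_Ioi.mpr (by linarith))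
  refine ⟨fun t ht => nonneg_of_deriv_add_mul_nonneg
    ((continuousOn_div_one_add_rpow μ lam).mono (Ici_subset_Ioi.mpr (by norm_num)))
    (fun s hs => (hderiv2 s hs).continuousAt.continuousWithinAt)
    (fun s hs => hderiv2 s hs.le) (fun s hs => ?_) ?_ ht, max C 0 + 1, by simp, fun t ht => ?_⟩
  · rw [hηx2.deriv_add hh2 isOpen_Ioi (mem_Ioi.mpr (by linarith))]
    have hη : 0 ≤ ηx s + h s := add_nonneg (by rw [hηx]; positivity) (hbd s hs.le).1
    calc (0 : ℝ) ≤ μ * (lam + 1) / (γ + 1) * (ηx s + h s) ^ (-γ) :=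
          mul_nonneg (by positivity) (rpow_nonneg hη _)
      _ = _ := by linear_combination -hode s hs.le
  · rw [hηx2.deriv_add hh2 isOpen_Ioi (by norm_num), funext hηx,
      deriv_one_add_rpow α (by norm_num), h0']
    simpa using hα
  · rw [hηx t]
    exact le_add_and_add_le_mul (one_le_rpow (by linarith) hα) (hbd t ht).1 (hbd t ht).2

/-- Monotonicity and growth of the corrected stretch factor η̃_x = η̄_x + h. -/
theorem stmt_6 (γ lam μ C : ℝ) (hγ : 1 < γ) (hlam0 : 0 < lam) (hlam1 : lam ≤ 1) (hμ : 0 < μ)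
    (ηx : ℝ → ℝ) (hηx : ∀ t, ηx t = (1 + t) ^ ((lam + 1) / (γ + 1)))
    (h : ℝ → ℝ) (hsmooth : ContDiff ℝ 2 h)
    (hbd : ∀ t : ℝ, 0 ≤ t → 0 ≤ h t ∧ h t ≤ C)
    (hode : ∀ t : ℝ, 0 ≤ t →
      deriv (deriv h) t + (μ / (1 + t) ^ lam) * deriv h t
        - (μ * (lam + 1) / (γ + 1)) * (ηx t + h t) ^ (-γ)
        + deriv (deriv ηx) t + (μ / (1 + t) ^ lam) * deriv ηx t = 0)
    (h0 : h 0 = 0) (h0' : deriv h 0 = 0) :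
    (∀ t : ℝ, 0 ≤ t → 0 ≤ deriv (fun s => ηx s + h s) t) ∧
    ∃ K : ℝ, 1 ≤ K ∧ ∀ t : ℝ, 0 ≤ t →
      (1 + t) ^ ((lam + 1) / (γ + 1)) ≤ ηx t + h t ∧
      ηx t + h t ≤ K * (1 + t) ^ ((lam + 1) / (γ + 1)) :=
  stmt_6_general γ lam μ C hγ hlam0 hμ ηx hηx h hsmooth hbd hode h0'
end

section
/- First derivative decay for λ < 1: under the growth bound (1+t)^{(λ+1)/(γ+1)} ≤ η̃_x(t) ≤ K(1+t)^{(λ+1)/(γ+1)}, the Duhamel formula implies there exists C > 0 with 0 ≤ η̃_x'(t) ≤ C(1+t)^{(λ+1)/(γ+1) − 1} for all t ≥ 0. -/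
/-!
With `a(t) = μ (1 + t)^(-λ)` and the primitive `A(t) = μ (1 + t)^(1 - λ) / (1 - λ)` of `a`, the
function `e^A g` is nondecreasing whenever `g' + a g ≥ 0`. Applied to `g = f'`, whose forcing
`c f^(-γ)` is positive, this gives `f' ≥ 0`. The lower growth bound turns the forcing into
`O((1 + t)^(α - 1 - λ))` with `α = (λ + 1)/(γ + 1)`, and for `λ < 1` the damping dominates the
derivative of `B (1 + t)^(α - 1)` at large times, so `B (1 + t)^(α - 1)` is a supersolution there;
on the initial compact interval the bound holds for `B` large by continuity.
-/

open Real Set Filter Topology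

theorem nonneg_of_hasDerivAt_add_mul_nonneg {A a g g' : ℝ → ℝ} {T t : ℝ}
    (hA : ∀ s ∈ Ici T, HasDerivAt A (a s) s) (hg : ∀ s ∈ Ici T, HasDerivAt g (g' s) s)
    (hineq : ∀ s ∈ Ici T, 0 ≤ g' s + a s * g s) (hT : 0 ≤ g T) (ht : T ≤ t) : 0 ≤ g t := by
  have hderiv : ∀ s ∈ Ici T,
      HasDerivAt (fun s => exp (A s) * g s) (exp (A s) * (g' s + a s * g s)) s :=
    fun s hs => ((hA s hs).exp.mul (hg s hs)).congr_deriv (by ring)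
  have hmono : MonotoneOn (fun s => exp (A s) * g s) (Ici T) :=
    monotoneOn_of_hasDerivWithinAt_nonneg (convex_Ici T)
      (fun s hs => (hderiv s hs).continuousAt.continuousWithinAt)
      (fun s hs => (hderiv s (interior_subset hs)).hasDerivWithinAt)
      (fun s hs => mul_nonneg (exp_pos _).le (hineq s (interior_subset hs)))
  have hle : exp (A T) * g T ≤ exp (A t) * g t := hmono self_mem_Ici ht ht
  exact (mul_nonneg_iff_of_pos_left (exp_pos (A t))).mp
    ((mul_nonneg (exp_pos _).le hT).trans hle)

section Damping

variable {μ lam : ℝ}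

theorem hasDerivAt_damping_primitive (hlam : lam ≠ 1) {t : ℝ} (ht : 0 < 1 + t) :
    HasDerivAt (fun s => μ / (1 - lam) * (1 + s) ^ (1 - lam)) (μ * (1 + t) ^ (-lam)) t := by
  have h := (((hasDerivAt_id' t).const_add 1).rpow_const (p := 1 - lam)
    (Or.inl ht.ne')).const_mul (μ / (1 - lam))
  refine h.congr_deriv ?_
  rw [sub_sub_cancel_left]
  field_simp [sub_ne_zero.mpr hlam.symm]

theorem nonneg_of_damped_deriv_nonneg (hlam : lam ≠ 1) {g g' : ℝ → ℝ} {T t : ℝ} (hT : -1 < T)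
    (hg : ∀ s ∈ Ici T, HasDerivAt g (g' s) s)
    (hineq : ∀ s ∈ Ici T, 0 ≤ g' s + μ * (1 + s) ^ (-lam) * g s) (hgT : 0 ≤ g T)
    (ht : T ≤ t) : 0 ≤ g t :=
  nonneg_of_hasDerivAt_add_mul_nonneg
    (fun s hs => hasDerivAt_damping_primitive hlam (by linarith [mem_Ici.mp hs])) hg hineq hgT ht

theorem eventually_neg_half_le_mul_rpow (hμ : 0 < μ) (hlam : lam < 1) (β : ℝ) :
    ∀ᶠ t in atTop, -(μ / 2) < β * (1 + t) ^ (lam - 1) := by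
  have hdecay : Tendsto (fun t : ℝ => (1 + t) ^ (lam - 1)) atTop (𝓝 0) := by
    rw [← neg_sub]
    exact (tendsto_rpow_neg_atTop (sub_pos.mpr hlam)).comp
      (tendsto_atTop_add_const_left atTop 1 tendsto_id)
  have hlim := hdecay.const_mul β
  rw [mul_zero] at hlim
  exact hlim.eventually_const_lt (by linarith)

theorem forcing_le_damped_deriv_rpow {β c B t : ℝ} (ht : 0 < 1 + t) (hB : 0 ≤ B)
    (hcB : 2 * c ≤ μ * B) (hβ : -(μ / 2) ≤ β * (1 + t) ^ (lam - 1)) :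
    c * (1 + t) ^ (β - lam) ≤
      B * β * (1 + t) ^ (β - 1) + μ * (1 + t) ^ (-lam) * (B * (1 + t) ^ β) := by
  have hP : 0 < (1 + t) ^ (β - lam) := rpow_pos_of_pos ht _
  have hsplit : (1 + t) ^ (β - 1) = (1 + t) ^ (β - lam) * (1 + t) ^ (lam - 1) := by
    rw [← rpow_add ht]; ring_nf
  have hdamp : (1 + t) ^ (-lam) * (1 + t) ^ β = (1 + t) ^ (β - lam) := by
    rw [← rpow_add ht]; ring_nf
  have hbracket : c ≤ B * (β * (1 + t) ^ (lam - 1)) + μ * B := by nlinarith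
  calc c * (1 + t) ^ (β - lam)
      ≤ (B * (β * (1 + t) ^ (lam - 1)) + μ * B) * (1 + t) ^ (β - lam) :=
        mul_le_mul_of_nonneg_right hbracket hP.le
    _ = B * β * (1 + t) ^ (β - 1) + μ * (1 + t) ^ (-lam) * (B * (1 + t) ^ β) := by
        rw [hsplit, mul_assoc μ, mul_left_comm _ B, hdamp]; ring

/-- On the compact interval where the damping need not dominate, the bound comes from continuity of
`g (1 + t)^(-β)`; beyond it, `B (1 + t)^β - g` satisfies the damped differential inequality. -/
theorem exists_le_mul_rpow_of_damped_deriv_le (hμ : 0 < μ) (hlam : lam < 1) {β c : ℝ}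
    {g g' : ℝ → ℝ} (hg : ∀ t ∈ Ici (0 : ℝ), HasDerivAt g (g' t) t)
    (hineq : ∀ t ∈ Ici (0 : ℝ), g' t + μ * (1 + t) ^ (-lam) * g t ≤ c * (1 + t) ^ (β - lam)) :
    ∃ C, 0 < C ∧ ∀ t, 0 ≤ t → g t ≤ C * (1 + t) ^ β := by
  obtain ⟨T, hT⟩ := ((eventually_neg_half_le_mul_rpow hμ hlam β).and
    (eventually_ge_atTop 0)).exists_forall_of_atTop
  have hT0 : 0 ≤ T := (hT T le_rfl).2
  have hcont : ContinuousOn (fun t => g t / (1 + t) ^ β) (Icc 0 T) := by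
    intro t ht
    have h1t : 0 < 1 + t := by linarith [ht.1]
    exact ((hg t ht.1).continuousAt.div
      ((continuousAt_const.add continuousAt_id).rpow_const (Or.inl h1t.ne'))
      (rpow_pos_of_pos h1t _).ne').continuousWithinAt
  obtain ⟨M, hM⟩ := isCompact_Icc.bddAbove_image hcont
  set B := max 1 (max M (2 * c / μ))
  have hB0 : 0 < B := one_pos.trans_le (le_max_left _ _)
  have hBM : M ≤ B := (le_max_left _ _).trans (le_max_right _ _)
  have hBc : 2 * c ≤ μ * B :=
    (div_le_iff₀' hμ).mp ((le_max_right _ _).trans (le_max_right _ _))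
  have hinitial : ∀ t ∈ Icc 0 T, g t ≤ B * (1 + t) ^ β := fun t ht =>
    (div_le_iff₀ (rpow_pos_of_pos (by linarith [ht.1]) _)).mp
      ((hM (mem_image_of_mem _ ht)).trans hBM)
  have hlate : ∀ t, T ≤ t → g t ≤ B * (1 + t) ^ β := by
    intro t ht
    refine sub_nonneg.mp (nonneg_of_damped_deriv_nonneg (μ := μ) hlam.ne
      (g := fun s => B * (1 + s) ^ β - g s) (g' := fun s => B * β * (1 + s) ^ (β - 1) - g' s)
      (by linarith) (fun s hs => ?_) (fun s hs => ?_)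
      (sub_nonneg.mpr (hinitial T ⟨hT0, le_rfl⟩)) ht)
    · have h1s : 0 < 1 + s := by linarith [mem_Ici.mp hs]
      have hpow := (((hasDerivAt_id' s).const_add 1).rpow_const (p := β)
        (Or.inl h1s.ne')).const_mul B
      exact (hpow.congr_deriv (by ring)).sub (hg s (hT0.trans hs))
    · have hsup := forcing_le_damped_deriv_rpow (c := c) (by linarith [mem_Ici.mp hs]) hB0.le hBc
        (hT s hs).1.le
      have hsub := hineq s (hT0.trans hs)
      simp only [mul_sub]
      linarith
  exact ⟨B, hB0, fun t ht => (le_total t T).elim (fun h => hinitial t ⟨ht, h⟩) (hlate t)⟩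

end Damping

theorem stmt_8_general (γ lam μ K : ℝ) (hγ : 1 < γ) (hlam0 : 0 < lam) (hlam1 : lam < 1)
    (hμ : 0 < μ)
    (f : ℝ → ℝ) (hsmooth : ContDiff ℝ 2 f)
    (hode : ∀ t : ℝ, 0 ≤ t →
      deriv (deriv f) t + μ * (1 + t) ^ (-lam) * deriv f t
        = (μ * (lam + 1) / (γ + 1)) * (f t) ^ (-γ))
    (h0' : deriv f 0 = (lam + 1) / (γ + 1))
    (hgrow : ∀ t : ℝ, 0 ≤ t →
      (1 + t) ^ ((lam + 1) / (γ + 1)) ≤ f t ∧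
      f t ≤ K * (1 + t) ^ ((lam + 1) / (γ + 1))) :
    ∃ C : ℝ, 0 < C ∧ ∀ t : ℝ, 0 ≤ t →
      0 ≤ deriv f t ∧ deriv f t ≤ C * (1 + t) ^ ((lam + 1) / (γ + 1) - 1) := by
  set α := (lam + 1) / (γ + 1) with hα
  have hc : 0 < μ * (lam + 1) / (γ + 1) := div_pos (mul_pos hμ (by linarith)) (by linarith)
  have hg : ∀ t ∈ Ici (0 : ℝ), HasDerivAt (deriv f) (deriv (deriv f) t) t :=
    fun t _ => (hsmooth.differentiable_deriv_two t).hasDerivAt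
  have hforcing : ∀ t ∈ Ici (0 : ℝ), 0 < f t ^ (-γ) ∧ f t ^ (-γ) ≤ (1 + t) ^ (α - 1 - lam) := by
    intro t ht
    have h1t : 0 < 1 + t := by linarith [mem_Ici.mp ht]
    have hlow : (1 + t) ^ α ≤ f t := (hgrow t ht).1
    have hexp : α * (-γ) = α - 1 - lam := by rw [hα]; field_simp; ring
    refine ⟨rpow_pos_of_pos ((rpow_pos_of_pos h1t α).trans_le hlow) _, ?_⟩
    rw [← hexp, rpow_mul h1t.le]
    exact rpow_le_rpow_of_nonpos (rpow_pos_of_pos h1t α) hlow (by linarith)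
  obtain ⟨C, hC, hle⟩ := exists_le_mul_rpow_of_damped_deriv_le hμ hlam1 (β := α - 1) hg
    fun t ht => by rw [hode t ht]; exact mul_le_mul_of_nonneg_left (hforcing t ht).2 hc.le
  refine ⟨C, hC, fun t ht => ⟨?_, hle t ht⟩⟩
  refine nonneg_of_damped_deriv_nonneg (μ := μ) hlam1.ne (by norm_num) hg (fun s hs => ?_) ?_ ht
  · rw [hode s hs]
    exact (mul_pos hc (hforcing s hs).1).le
  · rw [h0']
    exact div_nonneg (by linarith) (by linarith)

/-- First derivative decay of the corrected stretch factor for λ < 1. -/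
theorem stmt_8 (γ lam μ K : ℝ) (hγ : 1 < γ) (hlam0 : 0 < lam) (hlam1 : lam < 1)
    (hμ : 0 < μ) (hK : 1 ≤ K)
    (f : ℝ → ℝ) (hfpos : ∀ t : ℝ, 0 ≤ t → 0 < f t) (hsmooth : ContDiff ℝ 2 f)
    (hode : ∀ t : ℝ, 0 ≤ t →
      deriv (deriv f) t + μ * (1 + t) ^ (-lam) * deriv f t
        = (μ * (lam + 1) / (γ + 1)) * (f t) ^ (-γ))
    (h0 : f 0 = 1) (h0' : deriv f 0 = (lam + 1) / (γ + 1))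
    (hgrow : ∀ t : ℝ, 0 ≤ t →
      (1 + t) ^ ((lam + 1) / (γ + 1)) ≤ f t ∧
      f t ≤ K * (1 + t) ^ ((lam + 1) / (γ + 1))) :
    ∃ C : ℝ, 0 < C ∧ ∀ t : ℝ, 0 ≤ t →
      0 ≤ deriv f t ∧ deriv f t ≤ C * (1 + t) ^ ((lam + 1) / (γ + 1) - 1) :=
  stmt_8_general γ lam μ K hγ hlam0 hlam1 hμ f hsmooth hode h0' hgrow
end

section
/- First derivative decay in the critical case λ = 1: if η̃_x satisfies the Duhamel formula η̃_x'(t) = (2/(γ+1))(1+t)^{−μ} + (2μ/(γ+1))(1+t)^{−μ} ∫₀^t (1+s)^μ η̃_x(s)^{−γ} ds and the bound η̃_x(t) ≥ (1+t)^{2/(γ+1)}, then 0 ≤ η̃_x'(t) ≤ C(1+t)^{2/(γ+1) − 1} for some constant C and all t ≥ 0. -/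
/-!
Since `η̃ ≥ (1+s)^β` with `β = 2/(γ+1)`, the integrand of the Duhamel term is at most
`(1+s)^(μ-βγ) ≤ (1+t)^(μ-βγ)`, so the integral over `[0,t]` is at most `(1+t)^(μ-βγ+1)`.
Multiplying by `(1+t)^(-μ)` leaves `(1+t)^(1-βγ) = (1+t)^(β-1)`, the choice of `β` making
`β(γ+1) = 2`; the forcing term `(1+t)^(-μ)` decays even faster because `μ > 2`.
-/

open Real intervalIntegral

lemma rpow_mul_rpow_neg_le_of_rpow_le {x y β γ μ : ℝ} (hx : 0 < x) (hxy : x ^ β ≤ y)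
    (hγ : 0 ≤ γ) : x ^ μ * y ^ (-γ) ≤ x ^ (μ - β * γ) := by
  have hy : y ^ (-γ) ≤ (x ^ β) ^ (-γ) :=
    rpow_le_rpow_of_nonpos (rpow_pos_of_pos hx β) hxy (neg_nonpos.mpr hγ)
  calc x ^ μ * y ^ (-γ) ≤ x ^ μ * (x ^ β) ^ (-γ) := by gcongr
    _ = x ^ (μ - β * γ) := by
      rw [← rpow_mul hx.le, ← rpow_add hx, mul_neg, sub_eq_add_neg]

section DuhamelIntegral

variable {f : ℝ → ℝ} {β γ μ t : ℝ}

lemma integral_one_add_rpow_mul_rpow_neg_nonneg (ht : 0 ≤ t)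
    (hf : ∀ s ∈ Set.Icc 0 t, 0 ≤ f s) :
    0 ≤ ∫ s in (0 : ℝ)..t, (1 + s) ^ μ * f s ^ (-γ) :=
  integral_nonneg ht fun s hs => by
    have h1s : 0 ≤ 1 + s := by linarith [hs.1]
    have := hf s hs
    positivity

lemma integral_one_add_rpow_mul_rpow_neg_le (ht : 0 ≤ t) (hγ : 0 ≤ γ) (hβγ : β * γ ≤ μ)
    (hf : ∀ s, 0 ≤ s → (1 + s) ^ β ≤ f s) :
    ∫ s in (0 : ℝ)..t, (1 + s) ^ μ * f s ^ (-γ) ≤ (1 + t) ^ (μ - β * γ + 1) := by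
  have hbound : ∀ s ∈ Set.uIoc 0 t, ‖(1 + s) ^ μ * f s ^ (-γ)‖ ≤ (1 + t) ^ (μ - β * γ) := by
    intro s hs
    rw [Set.uIoc_of_le ht] at hs
    have h1s : 0 < 1 + s := by linarith [hs.1]
    have hfs : 0 ≤ f s := (rpow_pos_of_pos h1s β).le.trans (hf s hs.1.le)
    rw [Real.norm_of_nonneg (by positivity)]
    calc (1 + s) ^ μ * f s ^ (-γ) ≤ (1 + s) ^ (μ - β * γ) :=
          rpow_mul_rpow_neg_le_of_rpow_le h1s (hf s hs.1.le) hγ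
      _ ≤ (1 + t) ^ (μ - β * γ) := by
          gcongr
          linarith [hs.2]
  have h1t : 0 < 1 + t := by linarith
  calc ∫ s in (0 : ℝ)..t, (1 + s) ^ μ * f s ^ (-γ)
      ≤ ‖∫ s in (0 : ℝ)..t, (1 + s) ^ μ * f s ^ (-γ)‖ := le_norm_self _
    _ ≤ (1 + t) ^ (μ - β * γ) * |t - 0| := norm_integral_le_of_norm_le_const hbound
    _ ≤ (1 + t) ^ (μ - β * γ) * (1 + t) := by
        rw [sub_zero, abs_of_nonneg ht]; gcongr; linarith
    _ = (1 + t) ^ (μ - β * γ + 1) := by rw [rpow_add_one h1t.ne']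

end DuhamelIntegral

theorem stmt_10_general (γ μ : ℝ) (hγ : 1 < γ) (hμ : 2 < μ)
    (f : ℝ → ℝ)
    (hduh : ∀ t : ℝ, 0 ≤ t →
      deriv f t =
        (2 / (γ + 1)) * (1 + t) ^ (-μ) +
          (2 * μ / (γ + 1)) * (1 + t) ^ (-μ) *
            ∫ s in (0:ℝ)..t, (1 + s) ^ μ * (f s) ^ (-γ))
    (hgrow : ∀ t : ℝ, 0 ≤ t → (1 + t) ^ (2 / (γ + 1)) ≤ f t) :
    ∃ C : ℝ, 0 < C ∧ ∀ t : ℝ, 0 ≤ t →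
      0 ≤ deriv f t ∧ deriv f t ≤ C * (1 + t) ^ (2 / (γ + 1) - 1) := by
  set β := 2 / (γ + 1)
  have hβγ : β * (γ + 1) = 2 := div_mul_cancel₀ 2 (by linarith)
  have hβ_pos : 0 < β := by positivity
  refine ⟨2 / (γ + 1) + 2 * μ / (γ + 1), by positivity, fun t ht => ?_⟩
  have h1t : 1 ≤ 1 + t := by linarith
  have hf_nonneg : ∀ s ∈ Set.Icc 0 t, 0 ≤ f s := fun s hs =>
    (rpow_nonneg (by linarith [hs.1]) β).trans (hgrow s hs.1)
  have hI_nonneg := integral_one_add_rpow_mul_rpow_neg_nonneg (μ := μ) (γ := γ) ht hf_nonneg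
  have hI_le := integral_one_add_rpow_mul_rpow_neg_le (γ := γ) (μ := μ) ht (by linarith)
    (by nlinarith) hgrow
  have hforcing : (1 + t) ^ (-μ) ≤ (1 + t) ^ (β - 1) :=
    rpow_le_rpow_of_exponent_le h1t (by linarith)
  have hdecay : (1 + t) ^ (-μ) * (1 + t) ^ (μ - β * γ + 1) = (1 + t) ^ (β - 1) := by
    rw [← rpow_add (by linarith)]
    congr 1
    linarith
  rw [hduh t ht]
  constructor
  · positivity
  · calc 2 / (γ + 1) * (1 + t) ^ (-μ) + 2 * μ / (γ + 1) * (1 + t) ^ (-μ) *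
          ∫ s in (0:ℝ)..t, (1 + s) ^ μ * f s ^ (-γ)
        ≤ 2 / (γ + 1) * (1 + t) ^ (β - 1) +
            2 * μ / (γ + 1) * ((1 + t) ^ (-μ) * (1 + t) ^ (μ - β * γ + 1)) := by
          rw [mul_assoc (2 * μ / (γ + 1))]
          gcongr
      _ = (2 / (γ + 1) + 2 * μ / (γ + 1)) * (1 + t) ^ (β - 1) := by rw [hdecay]; ring

/-- First derivative decay in the critical case λ = 1. -/
theorem stmt_10 (γ μ : ℝ) (hγ : 1 < γ) (hμ : 2 < μ)
    (f : ℝ → ℝ) (hfpos : ∀ t : ℝ, 0 ≤ t → 0 < f t)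
    (hduh : ∀ t : ℝ, 0 ≤ t →
      deriv f t =
        (2 / (γ + 1)) * (1 + t) ^ (-μ) +
          (2 * μ / (γ + 1)) * (1 + t) ^ (-μ) *
            ∫ s in (0:ℝ)..t, (1 + s) ^ μ * (f s) ^ (-γ))
    (hgrow : ∀ t : ℝ, 0 ≤ t → (1 + t) ^ (2 / (γ + 1)) ≤ f t) :
    ∃ C : ℝ, 0 < C ∧ ∀ t : ℝ, 0 ≤ t →
      0 ≤ deriv f t ∧ deriv f t ≤ C * (1 + t) ^ (2 / (γ + 1) - 1) :=
  stmt_10_general γ μ hγ hμ f hduh hgrow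
end

section
/- Integral estimate used for the corrector derivative bounds (λ < 1): for μ > 0, 0 < λ < 1, and any exponent a > λ − 1, there is a constant C such that ∫₀^t e^{(μ/(1−λ))[(1+s)^{1−λ} − (1+t)^{1−λ}]} (1+s)^{−a} ds ≤ C (1+t)^{−a+λ} for all t ≥ 0. -/
/-!
Put `q = 1 - λ`, `ν = μ / q` and `x = 1 + s`: the integral becomes
`e^{-ν T^q} ∫₁^T e^{ν x^q} x^{-a} dx` with `T = 1 + t`. The function `F x = e^{ν x^q} x^{-a+λ}` has
`F' x = e^{ν x^q} x^{-a} (ν q + (λ - a) x^{-q})`, and the bracket is at least `ν q / 2` beyond some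
`x₀`, so there the integrand is at most `2 F' / (ν q)` and its integral at most `2 F(T) / (ν q)`.
The integral over `[1, x₀]` is a constant, and a constant is `O(F(T))` because the exponential
beats every power of `T`.
-/

open Real Filter intervalIntegral

lemma hasDerivAt_exp_mul_rpow_mul_rpow (ν q c : ℝ) {x : ℝ} (hx : 0 < x) :
    HasDerivAt (fun y => exp (ν * y ^ q) * y ^ (c + 1 - q))
      (exp (ν * x ^ q) * x ^ c * (ν * q + (c + 1 - q) * x ^ (-q))) x := by
  have h := (((hasDerivAt_rpow_const (p := q) (Or.inl hx.ne')).const_mul ν).exp).mul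
    (hasDerivAt_rpow_const (p := c + 1 - q) (Or.inl hx.ne'))
  refine h.congr_deriv ?_
  have hc : x ^ c = x ^ (q - 1) * x ^ (c + 1 - q) := by rw [← rpow_add hx]; ring_nf
  have hc' : x ^ (c + 1 - q - 1) = x ^ c * x ^ (-q) := by rw [← rpow_add hx]; ring_nf
  rw [hc', hc]
  ring

lemma continuousOn_exp_mul_rpow_mul_rpow (ν q c : ℝ) :
    ContinuousOn (fun x => exp (ν * x ^ q) * x ^ c) (Set.Ioi 0) := by
  intro x hx
  exact ((continuousAt_const.mul (continuousAt_rpow_const _ _ (Or.inl (ne_of_gt hx)))).rexp.mul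
    (continuousAt_rpow_const _ _ (Or.inl (ne_of_gt hx)))).continuousWithinAt

lemma intervalIntegrable_exp_mul_rpow_mul_rpow (ν q c : ℝ) {a b : ℝ} (ha : 0 < a) (hb : 0 < b) :
    IntervalIntegrable (fun x => exp (ν * x ^ q) * x ^ c) MeasureTheory.volume a b :=
  ((continuousOn_exp_mul_rpow_mul_rpow ν q c).mono fun _ hx =>
    lt_of_lt_of_le (lt_min ha hb) hx.1).intervalIntegrable

lemma exists_rpow_le_mul_exp_mul_rpow {ν q : ℝ} (hν : 0 < ν) (hq : 0 < q) (p : ℝ) :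
    ∃ K > 0, ∀ x, 1 ≤ x → x ^ p ≤ K * exp (ν * x ^ q) := by
  obtain ⟨n, hn⟩ := exists_nat_ge (p / q)
  refine ⟨n.factorial / ν ^ n, by positivity, fun x hx => ?_⟩
  have hx0 : 0 < x := one_pos.trans_le hx
  calc x ^ p ≤ x ^ (q * n) := rpow_le_rpow_of_exponent_le hx (by rwa [div_le_iff₀' hq] at hn)
    _ = n.factorial / ν ^ n * ((ν * x ^ q) ^ n / n.factorial) := by
        rw [mul_pow, ← rpow_natCast (x ^ q) n, ← rpow_mul hx0.le]
        field_simp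
    _ ≤ n.factorial / ν ^ n * exp (ν * x ^ q) := by
        gcongr
        exact pow_div_factorial_le_exp _ (by positivity) n

lemma eventually_half_le_add_mul_rpow_neg {m q : ℝ} (hm : 0 < m) (hq : 0 < q) (p : ℝ) :
    ∀ᶠ x in atTop, m / 2 ≤ m + p * x ^ (-q) := by
  have h := ((tendsto_rpow_neg_atTop hq).const_mul p).const_add m
  rw [mul_zero, add_zero] at h
  exact h.eventually (eventually_ge_nhds (by linarith))

lemma integral_exp_mul_rpow_mul_rpow_le_of_forall {ν q c x₀ T : ℝ} (hν : 0 < ν) (hq : 0 < q)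
    (hx₀ : 0 < x₀) (hT : x₀ ≤ T)
    (h : ∀ x ∈ Set.Icc x₀ T, ν * q / 2 ≤ ν * q + (c + 1 - q) * x ^ (-q)) :
    ∫ x in x₀..T, exp (ν * x ^ q) * x ^ c ≤ 2 / (ν * q) * (exp (ν * T ^ q) * T ^ (c + 1 - q)) := by
  have hpos : ∀ x ∈ Set.Icc x₀ T, 0 < x := fun x hx => hx₀.trans_le hx.1
  have hcont : ContinuousOn (fun x => 2 / (ν * q) * (exp (ν * x ^ q) * x ^ (c + 1 - q)))
      (Set.Icc x₀ T) :=
    continuousOn_const.mul ((continuousOn_exp_mul_rpow_mul_rpow ν q _).mono hpos)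
  have hderiv : ∀ x ∈ Set.Ioo x₀ T, HasDerivWithinAt
      (fun x => 2 / (ν * q) * (exp (ν * x ^ q) * x ^ (c + 1 - q)))
      (2 / (ν * q) * (exp (ν * x ^ q) * x ^ c * (ν * q + (c + 1 - q) * x ^ (-q)))) (Set.Ioi x) x :=
    fun x hx => ((hasDerivAt_exp_mul_rpow_mul_rpow ν q c
      (hpos x (Set.Ioo_subset_Icc_self hx))).const_mul _).hasDerivWithinAt
  have hint : MeasureTheory.IntegrableOn (fun x => exp (ν * x ^ q) * x ^ c) (Set.Icc x₀ T) :=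
    ((continuousOn_exp_mul_rpow_mul_rpow ν q c).mono hpos).integrableOn_Icc
  have hle : ∀ x ∈ Set.Ioo x₀ T, exp (ν * x ^ q) * x ^ c ≤
      2 / (ν * q) * (exp (ν * x ^ q) * x ^ c * (ν * q + (c + 1 - q) * x ^ (-q))) := by
    intro x hx
    have hf : 0 ≤ exp (ν * x ^ q) * x ^ c :=
      mul_nonneg (exp_pos _).le (rpow_nonneg (hpos x (Set.Ioo_subset_Icc_self hx)).le _)
    calc exp (ν * x ^ q) * x ^ c = 2 / (ν * q) * (exp (ν * x ^ q) * x ^ c * (ν * q / 2)) := by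
          field_simp
      _ ≤ _ := by gcongr; exact h x (Set.Ioo_subset_Icc_self hx)
  calc ∫ x in x₀..T, exp (ν * x ^ q) * x ^ c
      ≤ 2 / (ν * q) * (exp (ν * T ^ q) * T ^ (c + 1 - q))
        - 2 / (ν * q) * (exp (ν * x₀ ^ q) * x₀ ^ (c + 1 - q)) :=
        integral_le_sub_of_hasDeriv_right_of_le hT hcont hderiv hint hle
    _ ≤ 2 / (ν * q) * (exp (ν * T ^ q) * T ^ (c + 1 - q)) :=
        sub_le_self _ (by have := rpow_nonneg hx₀.le (c + 1 - q); positivity)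

lemma integral_exp_mul_rpow_mul_rpow_le_of_le {ν q c x₀ T : ℝ} (hν : 0 ≤ ν) (hq : 0 ≤ q)
    (hT₁ : 1 ≤ T) (hT : T ≤ x₀) :
    ∫ x in (1 : ℝ)..T, exp (ν * x ^ q) * x ^ c ≤ (x₀ - 1) * (exp (ν * x₀ ^ q) * x₀ ^ |c|) := by
  have hbound : ∀ x ∈ Set.uIoc 1 T, ‖exp (ν * x ^ q) * x ^ c‖ ≤ exp (ν * x₀ ^ q) * x₀ ^ |c| := by
    intro x hx
    rw [Set.uIoc_of_le hT₁] at hx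
    have hx₁ : 1 ≤ x := hx.1.le
    have hxx₀ : x ≤ x₀ := hx.2.trans hT
    rw [Real.norm_of_nonneg (by positivity)]
    have hpow : x ^ c ≤ x₀ ^ |c| :=
      calc x ^ c ≤ x ^ |c| := rpow_le_rpow_of_exponent_le hx₁ (le_abs_self c)
        _ ≤ x₀ ^ |c| := rpow_le_rpow (by linarith) hxx₀ (abs_nonneg c)
    gcongr
  calc ∫ x in (1 : ℝ)..T, exp (ν * x ^ q) * x ^ c
      ≤ (exp (ν * x₀ ^ q) * x₀ ^ |c|) * |T - 1| :=
        (le_abs_self _).trans (norm_integral_le_of_norm_le_const hbound)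
    _ ≤ (x₀ - 1) * (exp (ν * x₀ ^ q) * x₀ ^ |c|) := by
        have := rpow_nonneg (show 0 ≤ x₀ by linarith) |c|
        rw [abs_of_nonneg (sub_nonneg.2 hT₁), mul_comm]
        gcongr

lemma exists_integral_exp_mul_rpow_mul_rpow_le {ν q : ℝ} (hν : 0 < ν) (hq : 0 < q) (c : ℝ) :
    ∃ C > 0, ∀ T, 1 ≤ T →
      ∫ x in (1 : ℝ)..T, exp (ν * x ^ q) * x ^ c ≤ C * (exp (ν * T ^ q) * T ^ (c + 1 - q)) := by
  obtain ⟨x₀, hx₀⟩ := eventually_atTop.1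
    ((eventually_half_le_add_mul_rpow_neg (mul_pos hν hq) hq (c + 1 - q)).and
      (eventually_ge_atTop 1))
  have hx₀₁ : 1 ≤ x₀ := (hx₀ x₀ le_rfl).2
  obtain ⟨K, hK, hpowK⟩ := exists_rpow_le_mul_exp_mul_rpow hν hq (-(c + 1 - q))
  set M := (x₀ - 1) * (exp (ν * x₀ ^ q) * x₀ ^ |c|)
  have hM : 0 ≤ M := by
    have := rpow_nonneg (zero_le_one.trans hx₀₁) |c|
    have := sub_nonneg.2 hx₀₁
    positivity
  have hMK : ∀ T, 1 ≤ T → M ≤ M * K * (exp (ν * T ^ q) * T ^ (c + 1 - q)) := by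
    intro T hT
    have hTp : 0 < T ^ (c + 1 - q) := rpow_pos_of_pos (zero_lt_one.trans_le hT) _
    have h1 : 1 ≤ K * (exp (ν * T ^ q) * T ^ (c + 1 - q)) := by
      have := mul_le_mul_of_nonneg_right (hpowK T hT) hTp.le
      rwa [rpow_neg (zero_le_one.trans hT), inv_mul_cancel₀ hTp.ne', mul_assoc] at this
    calc M = M * 1 := (mul_one M).symm
      _ ≤ M * (K * (exp (ν * T ^ q) * T ^ (c + 1 - q))) := mul_le_mul_of_nonneg_left h1 hM
      _ = M * K * (exp (ν * T ^ q) * T ^ (c + 1 - q)) := (mul_assoc _ _ _).symm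
  refine ⟨M * K + 2 / (ν * q), by positivity, fun T hT => ?_⟩
  have hF : 0 ≤ exp (ν * T ^ q) * T ^ (c + 1 - q) := by
    have := rpow_nonneg (zero_le_one.trans hT) (c + 1 - q)
    positivity
  rcases le_or_gt T x₀ with hTx₀ | hx₀T
  · calc ∫ x in (1 : ℝ)..T, exp (ν * x ^ q) * x ^ c
        ≤ M := integral_exp_mul_rpow_mul_rpow_le_of_le hν.le hq.le hT hTx₀
      _ ≤ M * K * (exp (ν * T ^ q) * T ^ (c + 1 - q)) := hMK T hT
      _ ≤ (M * K + 2 / (ν * q)) * (exp (ν * T ^ q) * T ^ (c + 1 - q)) := by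
        gcongr
        exact le_add_of_nonneg_right (by positivity)
  · rw [← integral_add_adjacent_intervals
      (intervalIntegrable_exp_mul_rpow_mul_rpow ν q c one_pos (by linarith : (0 : ℝ) < x₀))
      (intervalIntegrable_exp_mul_rpow_mul_rpow ν q c (by linarith) (by linarith : (0 : ℝ) < T)),
      add_mul]
    exact add_le_add
      ((integral_exp_mul_rpow_mul_rpow_le_of_le hν.le hq.le hx₀₁ le_rfl).trans (hMK T hT))
      (integral_exp_mul_rpow_mul_rpow_le_of_forall hν hq (by linarith) hx₀T.le
        fun x hx => (hx₀ x hx.1).1)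

theorem stmt_11_general (μ lam a : ℝ) (hμ : 0 < μ) (hlam1 : lam < 1) :
    ∃ C : ℝ, 0 < C ∧ ∀ t : ℝ, 0 ≤ t →
      (∫ s in (0:ℝ)..t,
          Real.exp ((μ / (1 - lam)) * ((1 + s) ^ (1 - lam) - (1 + t) ^ (1 - lam))) *
            (1 + s) ^ (-a)) ≤ C * (1 + t) ^ (-a + lam) := by
  have hq : 0 < 1 - lam := sub_pos.2 hlam1
  obtain ⟨C, hC, hbound⟩ := exists_integral_exp_mul_rpow_mul_rpow_le (div_pos hμ hq) hq (-a)
  refine ⟨C, hC, fun t ht => ?_⟩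
  set ν := μ / (1 - lam)
  have hshift : ∫ s in (0:ℝ)..t, exp (ν * (1 + s) ^ (1 - lam)) * (1 + s) ^ (-a)
      = ∫ x in (1:ℝ)..1 + t, exp (ν * x ^ (1 - lam)) * x ^ (-a) := by
    simpa using integral_comp_add_left (a := 0) (b := t)
      (fun x => exp (ν * x ^ (1 - lam)) * x ^ (-a)) 1
  calc (∫ s in (0:ℝ)..t, exp (ν * ((1 + s) ^ (1 - lam) - (1 + t) ^ (1 - lam))) * (1 + s) ^ (-a))
      = exp (-(ν * (1 + t) ^ (1 - lam))) *
          ∫ s in (0:ℝ)..t, exp (ν * (1 + s) ^ (1 - lam)) * (1 + s) ^ (-a) := by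
        rw [← integral_const_mul]
        congr 1 with s
        rw [mul_sub, sub_eq_add_neg, exp_add]
        ring
    _ ≤ exp (-(ν * (1 + t) ^ (1 - lam))) *
          (C * (exp (ν * (1 + t) ^ (1 - lam)) * (1 + t) ^ (-a + 1 - (1 - lam)))) := by
        rw [hshift]
        gcongr
        exact hbound _ (by linarith)
    _ = C * (1 + t) ^ (-a + lam) := by
        rw [show -a + 1 - (1 - lam) = -a + lam by ring, exp_neg]
        field_simp

/-- Integral estimate used for the corrector derivative bounds when λ < 1. -/
theorem stmt_11 (μ lam a : ℝ) (hμ : 0 < μ) (hlam0 : 0 < lam) (hlam1 : lam < 1)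
    (ha : lam - 1 < a) :
    ∃ C : ℝ, 0 < C ∧ ∀ t : ℝ, 0 ≤ t →
      (∫ s in (0:ℝ)..t,
          Real.exp ((μ / (1 - lam)) * ((1 + s) ^ (1 - lam) - (1 + t) ^ (1 - lam))) *
            (1 + s) ^ (-a)) ≤ C * (1 + t) ^ (-a + lam) :=
  stmt_11_general μ lam a hμ hlam1
end

section
/- ODE energy decay for the linearized damped equation with λ = 1, μ > 2 (scalar model): let κ = (μ−2)/2 > 0 and suppose y: [0,∞) → ℝ is C² and satisfies y'' + (μ/(1+t)) y' + c(t) y = 0 where c(t) ≥ c₀(1+t)^{−2} with c₀ > 0. Then the quantity E(t) = (1+t)² (y')² /2 + (1+κ)(1+t) y y' + ((1+κ)(1+2κ)/2) y² + (1+t)² c(t) y²/2 satisfies, whenever c'(t) ≤ 0, the differential inequality E'(t) + κ(1+t)[(y')² + c(t) y²] ≤ 0. -/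
open Real

/-! Differentiating `E` along a solution and eliminating `y''` with the equation, the
derivative `E' + κ (1 + t) (y'² + c y²)` collapses to `(1 + t)² c' y² / 2`, whose sign is that
of `c'`. The coefficients `1 + κ` and `(1 + κ)(1 + 2κ)/2` are chosen exactly so that all the
other terms cancel when `μ = 2κ + 2`. -/

/-- `v` plays the role of `y'`. -/
noncomputable def dampedEnergy (κ : ℝ) (c y v : ℝ → ℝ) (s : ℝ) : ℝ :=
  (1 + s) ^ 2 * v s ^ 2 / 2 + (1 + κ) * (1 + s) * y s * v s
    + ((1 + κ) * (1 + 2 * κ) / 2) * y s ^ 2 + (1 + s) ^ 2 * c s * y s ^ 2 / 2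

theorem hasDerivAt_dampedEnergy {κ t v' c' : ℝ} {c y v : ℝ → ℝ}
    (hy : HasDerivAt y (v t) t) (hv : HasDerivAt v v' t) (hc : HasDerivAt c c' t) :
    HasDerivAt (dampedEnergy κ c y v)
      ((1 + t) * v t ^ 2 + (1 + t) ^ 2 * v t * v'
        + (1 + κ) * (y t * v t + (1 + t) * v t ^ 2 + (1 + t) * y t * v')
        + (1 + κ) * (1 + 2 * κ) * y t * v t
        + (1 + t) * c t * y t ^ 2 + (1 + t) ^ 2 * c' * y t ^ 2 / 2
        + (1 + t) ^ 2 * c t * y t * v t) t := by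
  have hs : HasDerivAt (fun s : ℝ => 1 + s) 1 t := (hasDerivAt_id t).const_add 1
  have hs2 := hs.pow 2
  have hE : HasDerivAt (dampedEnergy κ c y v) _ t := ((((hs2.mul (hv.pow 2)).div_const 2).add
    (((hs.const_mul (1 + κ)).mul hy).mul hv)).add
    ((hy.pow 2).const_mul ((1 + κ) * (1 + 2 * κ) / 2))).add
    (((hs2.mul hc).mul (hy.pow 2)).div_const 2)
  refine hE.congr_deriv ?_
  simp only [Pi.pow_apply, Pi.mul_apply]
  ring

theorem dampedEnergy_deriv_expr_add_dissipation {κ t yt vt v' ct c' : ℝ} (ht : 1 + t ≠ 0)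
    (hode : v' + (2 * κ + 2) / (1 + t) * vt + ct * yt = 0) :
    (1 + t) * vt ^ 2 + (1 + t) ^ 2 * vt * v'
        + (1 + κ) * (yt * vt + (1 + t) * vt ^ 2 + (1 + t) * yt * v')
        + (1 + κ) * (1 + 2 * κ) * yt * vt
        + (1 + t) * ct * yt ^ 2 + (1 + t) ^ 2 * c' * yt ^ 2 / 2
        + (1 + t) ^ 2 * ct * yt * vt
      + κ * (1 + t) * (vt ^ 2 + ct * yt ^ 2)
      = (1 + t) ^ 2 * c' * yt ^ 2 / 2 := by
  obtain rfl : v' = -((2 * κ + 2) / (1 + t) * vt) - ct * yt := by linear_combination hode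
  field_simp
  ring

theorem deriv_dampedEnergy_add_dissipation_nonpos {κ t : ℝ} {c y : ℝ → ℝ} (ht : 1 + t ≠ 0)
    (hy : DifferentiableAt ℝ y t) (hy' : DifferentiableAt ℝ (deriv y) t)
    (hc : DifferentiableAt ℝ c t) (hc' : deriv c t ≤ 0)
    (hode : deriv (deriv y) t + (2 * κ + 2) / (1 + t) * deriv y t + c t * y t = 0) :
    deriv (dampedEnergy κ c y (deriv y)) t
      + κ * (1 + t) * (deriv y t ^ 2 + c t * y t ^ 2) ≤ 0 := by
  rw [(hasDerivAt_dampedEnergy hy.hasDerivAt hy'.hasDerivAt hc.hasDerivAt).deriv,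
    dampedEnergy_deriv_expr_add_dissipation ht hode]
  exact div_nonpos_of_nonpos_of_nonneg
    (mul_nonpos_of_nonpos_of_nonneg (mul_nonpos_of_nonneg_of_nonpos (sq_nonneg _) hc')
      (sq_nonneg _)) zero_le_two

theorem stmt_14_general (μ : ℝ)
    (c : ℝ → ℝ) (hc : ContDiff ℝ 1 c)
    (hcdec : ∀ t : ℝ, 0 ≤ t → deriv c t ≤ 0)
    (y : ℝ → ℝ) (hy : ContDiff ℝ 2 y)
    (hode : ∀ t : ℝ, 0 ≤ t →
      deriv (deriv y) t + (μ / (1 + t)) * deriv y t + c t * y t = 0) :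
    ∀ t : ℝ, 0 ≤ t →
      deriv (fun s =>
          (1 + s) ^ 2 * (deriv y s) ^ 2 / 2
            + (1 + (μ - 2) / 2) * (1 + s) * y s * deriv y s
            + ((1 + (μ - 2) / 2) * (1 + 2 * ((μ - 2) / 2)) / 2) * (y s) ^ 2
            + (1 + s) ^ 2 * c s * (y s) ^ 2 / 2) t
        + ((μ - 2) / 2) * (1 + t) * ((deriv y t) ^ 2 + c t * (y t) ^ 2) ≤ 0 := by
  intro t ht
  have hμ : 2 * ((μ - 2) / 2) + 2 = μ := by ring
  refine deriv_dampedEnergy_add_dissipation_nonpos (by linarith)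
    (hy.differentiable two_ne_zero t) (hy.differentiable_deriv_two t)
    (hc.differentiable one_ne_zero t) (hcdec t ht) ?_
  rw [hμ]
  exact hode t ht

/-- ODE energy decay for the linearized damped equation with λ = 1, μ > 2
(scalar model of the basic weighted energy estimate). -/
theorem stmt_14 (μ : ℝ) (hμ : 2 < μ)
    (c : ℝ → ℝ) (c₀ : ℝ) (hc₀ : 0 < c₀) (hc : ContDiff ℝ 1 c)
    (hcpos : ∀ t : ℝ, 0 ≤ t → 0 < c t)
    (hclow : ∀ t : ℝ, 0 ≤ t → c₀ * (1 + t) ^ (-(2:ℝ)) ≤ c t)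
    (hcdec : ∀ t : ℝ, 0 ≤ t → deriv c t ≤ 0)
    (y : ℝ → ℝ) (hy : ContDiff ℝ 2 y)
    (hode : ∀ t : ℝ, 0 ≤ t →
      deriv (deriv y) t + (μ / (1 + t)) * deriv y t + c t * y t = 0) :
    ∀ t : ℝ, 0 ≤ t →
      deriv (fun s =>
          (1 + s) ^ 2 * (deriv y s) ^ 2 / 2
            + (1 + (μ - 2) / 2) * (1 + s) * y s * deriv y s
            + ((1 + (μ - 2) / 2) * (1 + 2 * ((μ - 2) / 2)) / 2) * (y s) ^ 2
            + (1 + s) ^ 2 * c s * (y s) ^ 2 / 2) t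
        + ((μ - 2) / 2) * (1 + t) * ((deriv y t) ^ 2 + c t * (y t) ^ 2) ≤ 0 :=
  stmt_14_general μ c hc hcdec y hy hode
end

section
/- Coercivity of the critical-case energy functional: for μ > 2, κ = (μ−2)/2, and c(t) ≍ (1+t)^{−2} (i.e., c₁(1+t)^{−2} ≤ c(t) ≤ c₂(1+t)^{−2} with 0 < c₁ ≤ c₂), the functional E(t) = (1+t)²(y')²/2 + (1+κ)(1+t) y y' + ((1+κ)(1+2κ)/2) y² + (1+t)² c(t) y²/2 satisfies E(t) ≍ (1+t)² (y')² + y², uniformly in t ≥ 0 and y, y' ∈ ℝ, with equivalence constants depending only on κ, c₁, c₂. -/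
open Real

/-! Writing `u = (1 + t) y'`, `a = 1 + κ` and `γ = (1 + t)² c(t) ∈ [c₁, c₂]`, completing the square
gives `E = (u + a y)² / 2 + (a (a - 1) + γ) / 2 · y²`. The coefficient of `y²` lies between two
positive constants independent of `t`, and a form `(u + a y)² / 2 + D y²` with `D` in such a range
is comparable to `u² + y²`. -/

lemma le_mul_rpow_neg_two_iff {s : ℝ} (hs : 0 < s) (k r : ℝ) :
    k * s ^ (-(2:ℝ)) ≤ r ↔ k ≤ s ^ 2 * r := by
  rw [rpow_neg hs.le, rpow_two, ← div_eq_mul_inv, div_le_iff₀ (by positivity), mul_comm]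

lemma mul_rpow_neg_two_le_iff {s : ℝ} (hs : 0 < s) (k r : ℝ) :
    r ≤ k * s ^ (-(2:ℝ)) ↔ s ^ 2 * r ≤ k := by
  rw [rpow_neg hs.le, rpow_two, ← div_eq_mul_inv, le_div_iff₀ (by positivity), mul_comm]

lemma critical_energy_eq_sq_add (κ s γ y y' : ℝ) :
    s ^ 2 * y' ^ 2 / 2 + (1 + κ) * s * y * y' + ((1 + κ) * (1 + 2 * κ) / 2) * y ^ 2
        + s ^ 2 * γ * y ^ 2 / 2
      = (s * y' + (1 + κ) * y) ^ 2 / 2 + ((1 + κ) * κ + s ^ 2 * γ) / 2 * y ^ 2 := by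
  ring

lemma min_mul_sq_add_sq_le {a d D : ℝ} (hd : 0 < d) (hdD : d ≤ D) (u y : ℝ) :
    min (1 / 4) (d / (2 * a ^ 2 + 1)) * (u ^ 2 + y ^ 2) ≤ (u + a * y) ^ 2 / 2 + D * y ^ 2 := by
  set m := min (1 / 4) (d / (2 * a ^ 2 + 1))
  have hm₀ : 0 ≤ m := le_min (by norm_num) (by positivity)
  have hm₁ : m ≤ 1 / 4 := min_le_left _ _
  have hm₂ : m * (2 * a ^ 2 + 1) ≤ d := (le_div_iff₀ (by positivity)).1 (min_le_right _ _)
  -- `u = (u + a y) - a y`, so `u² ≤ 2 (u + a y)² + 2 a² y²`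
  have hu : u ^ 2 ≤ 2 * (u + a * y) ^ 2 + 2 * a ^ 2 * y ^ 2 := by
    nlinarith [sq_nonneg (u + 2 * a * y)]
  nlinarith [mul_le_mul_of_nonneg_left hu hm₀, mul_le_mul_of_nonneg_right hm₂ (sq_nonneg y),
    mul_le_mul_of_nonneg_right hdD (sq_nonneg y), mul_le_mul_of_nonneg_right hm₁ (sq_nonneg (u + a * y))]

lemma sq_add_mul_sq_le {a D D' : ℝ} (hD : 0 ≤ D) (hDD' : D ≤ D') (u y : ℝ) :
    (u + a * y) ^ 2 / 2 + D * y ^ 2 ≤ (1 + a ^ 2 + D') * (u ^ 2 + y ^ 2) := by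
  nlinarith [sq_nonneg (u - a * y), mul_le_mul_of_nonneg_right hDD' (sq_nonneg y),
    mul_nonneg (hD.trans hDD') (sq_nonneg u), sq_nonneg a, mul_nonneg (sq_nonneg a) (sq_nonneg u)]

/-- Coercivity of the critical-case energy functional. -/
theorem stmt_15 (μ c₁ c₂ : ℝ) (hμ : 2 < μ) (hc₁ : 0 < c₁) (hc₁₂ : c₁ ≤ c₂)
    (c : ℝ → ℝ)
    (hc : ∀ t : ℝ, 0 ≤ t →
      c₁ * (1 + t) ^ (-(2:ℝ)) ≤ c t ∧ c t ≤ c₂ * (1 + t) ^ (-(2:ℝ))) :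
    ∃ m M : ℝ, 0 < m ∧ 0 < M ∧ ∀ t : ℝ, 0 ≤ t → ∀ y y' : ℝ,
      m * ((1 + t) ^ 2 * y' ^ 2 + y ^ 2) ≤
        (1 + t) ^ 2 * y' ^ 2 / 2
          + (1 + (μ - 2) / 2) * (1 + t) * y * y'
          + ((1 + (μ - 2) / 2) * (1 + 2 * ((μ - 2) / 2)) / 2) * y ^ 2
          + (1 + t) ^ 2 * c t * y ^ 2 / 2
      ∧ (1 + t) ^ 2 * y' ^ 2 / 2
          + (1 + (μ - 2) / 2) * (1 + t) * y * y'
          + ((1 + (μ - 2) / 2) * (1 + 2 * ((μ - 2) / 2)) / 2) * y ^ 2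
          + (1 + t) ^ 2 * c t * y ^ 2 / 2
        ≤ M * ((1 + t) ^ 2 * y' ^ 2 + y ^ 2) := by
  set κ := (μ - 2) / 2
  have hκ : 0 < κ := by simp only [κ]; linarith
  set a := 1 + κ
  have hd₁ : 0 < (a * κ + c₁) / 2 := by positivity
  have hc₂ : 0 < c₂ := hc₁.trans_le hc₁₂
  refine ⟨min (1 / 4) ((a * κ + c₁) / 2 / (2 * a ^ 2 + 1)), 1 + a ^ 2 + (a * κ + c₂) / 2,
    lt_min (by norm_num) (by positivity), by positivity, fun t ht y y' => ?_⟩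
  have hs : 0 < 1 + t := by linarith
  obtain ⟨hγ₁, hγ₂⟩ := hc t ht
  rw [le_mul_rpow_neg_two_iff hs] at hγ₁
  rw [mul_rpow_neg_two_le_iff hs] at hγ₂
  have hy' : (1 + t) ^ 2 * y' ^ 2 = ((1 + t) * y') ^ 2 := by ring
  rw [critical_energy_eq_sq_add, hy']
  exact ⟨min_mul_sq_add_sq_le hd₁ (by linarith) _ _,
    sq_add_mul_sq_le (by linarith) (by linarith) _ _⟩
end

section
/- Exponentially weighted Gronwall-type decay: let 0 < λ < 1, μ > 0. If y: [0,∞) → ℝ is C¹, y(0) = y₀, and satisfies y'(t) + μ(1+t)^{−λ} y(t) = g(t) with |g(t)| ≤ G(1+t)^{−a} for some a ∈ ℝ, then |y(t)| ≤ |y₀| e^{−(μ/(1−λ))((1+t)^{1−λ} − 1)} + C G (1+t)^{−a+λ} for a constant C = C(μ, λ, a) and all t ≥ 0. -/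
/-!
Multiplying by the integrating factor `exp Φ`, where `Φ' = μ (1 + t) ^ (-λ)` and `Φ 0 = 0`, gives
`exp (Φ t) |y t| ≤ |y₀| + G ∫₀ᵗ exp (Φ s) (1 + s) ^ (-a) ds`. The weight
`h = exp Φ · (1 + s) ^ (λ - a)` has derivative
`exp Φ · (1 + s) ^ (-a) · (μ + (λ - a) (1 + s) ^ (λ - 1))`, which is eventually at least `μ / 2`
times the integrand because `λ < 1`. Hence the integral is `O(h t)`, and dividing by `exp (Φ t)`
gives the bound.
-/

open Real Set Filter Topology intervalIntegral MeasureTheory.MeasureSpace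

theorem exp_mul_sub_exp_mul_eq_integral {Φ φ y g : ℝ → ℝ} {a b : ℝ}
    (hΦ : ∀ s ∈ uIcc a b, HasDerivAt Φ (φ s) s)
    (hy : ∀ s ∈ uIcc a b, HasDerivAt y (g s - φ s * y s) s)
    (hint : IntervalIntegrable (fun s => exp (Φ s) * g s) volume a b) :
    exp (Φ b) * y b - exp (Φ a) * y a = ∫ s in a..b, exp (Φ s) * g s :=
  (integral_eq_sub_of_hasDerivAt
    (fun s hs => ((hΦ s hs).exp.mul (hy s hs)).congr_deriv (by ring)) hint).symm

theorem exp_mul_abs_le_add_integral {Φ φ y g w : ℝ → ℝ} {a b G : ℝ} (hab : a ≤ b)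
    (hΦ : ∀ s ∈ Icc a b, HasDerivAt Φ (φ s) s)
    (hy : ∀ s ∈ Icc a b, HasDerivAt y (g s - φ s * y s) s)
    (hg : ContinuousOn g (Icc a b)) (hgw : ∀ s ∈ Icc a b, |g s| ≤ G * w s)
    (hw : IntervalIntegrable (fun s => exp (Φ s) * w s) volume a b) :
    exp (Φ b) * |y b| ≤ exp (Φ a) * |y a| + G * ∫ s in a..b, exp (Φ s) * w s := by
  rw [← uIcc_of_le hab] at hΦ hy hg
  have hΦc : ContinuousOn (fun s => exp (Φ s)) (uIcc a b) := fun s hs =>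
    (hΦ s hs).continuousAt.rexp.continuousWithinAt
  have hsol := exp_mul_sub_exp_mul_eq_integral hΦ hy (hΦc.mul hg).intervalIntegrable
  have hforce : |∫ s in a..b, exp (Φ s) * g s| ≤ G * ∫ s in a..b, exp (Φ s) * w s := by
    rw [← integral_const_mul, ← Real.norm_eq_abs]
    refine norm_integral_le_of_norm_le hab (.of_forall fun s hs => ?_) (hw.const_mul G)
    rw [Real.norm_eq_abs, abs_mul, abs_exp, mul_left_comm]
    exact mul_le_mul_of_nonneg_left (hgw s (Ioc_subset_Icc_self hs)) (exp_pos _).le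
  calc exp (Φ b) * |y b| = |exp (Φ a) * y a + ∫ s in a..b, exp (Φ s) * g s| := by
        rw [← hsol, add_sub_cancel, abs_mul, abs_of_pos (exp_pos _)]
    _ ≤ _ := by grw [abs_add_le, abs_mul, abs_of_pos (exp_pos _), hforce]

theorem exists_integral_le_mul_of_eventually_le_deriv {f h h' : ℝ → ℝ} {c : ℝ} (hc : 0 < c)
    (hf : ContinuousOn f (Ici 0)) (hf0 : ∀ s, 0 ≤ s → 0 ≤ f s)
    (hh : ∀ s, 0 ≤ s → HasDerivAt h (h' s) s) (hh0 : ∀ s, 0 ≤ s → 0 < h s)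
    (hfh : ∀ᶠ s in atTop, c * f s ≤ h' s) :
    ∃ C, 0 < C ∧ ∀ t, 0 ≤ t → ∫ s in (0 : ℝ)..t, f s ≤ C * h t := by
  obtain ⟨T, hT⟩ := eventually_atTop.mp (hfh.and (eventually_ge_atTop 0))
  have hT0 : 0 ≤ T := (hT T le_rfl).2
  have hfint : ∀ u v, 0 ≤ u → 0 ≤ v → IntervalIntegrable f volume u v := fun u v hu hv =>
    (hf.mono fun s (hs : s ∈ uIcc u v) => (le_min hu hv).trans hs.1).intervalIntegrable
  have hhc : ContinuousOn h (Icc 0 T) := fun s hs =>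
    (hh s hs.1).continuousAt.continuousWithinAt
  obtain ⟨m, hm, hmin⟩ := isCompact_Icc.exists_isMinOn (nonempty_Icc.2 hT0) hhc
  set M := ∫ s in (0 : ℝ)..T, f s
  -- `M / h m` handles `[0, T]` by compactness, `c⁻¹` the range where `h` grows like `c ∫ f`.
  set C := max c⁻¹ (M / h m)
  have hC : 0 < C := lt_max_of_lt_left (inv_pos.2 hc)
  have hsmall : ∀ t ∈ Icc 0 T, ∫ s in (0 : ℝ)..t, f s ≤ C * h t := by
    rintro t ⟨ht, htT⟩
    calc ∫ s in (0 : ℝ)..t, f s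
        ≤ (∫ s in (0 : ℝ)..t, f s) + ∫ s in t..T, f s :=
          le_add_of_nonneg_right (integral_nonneg htT fun s hs => hf0 s (ht.trans hs.1))
      _ = M := integral_add_adjacent_intervals (hfint 0 t le_rfl ht) (hfint t T ht hT0)
      _ = M / h m * h m := (div_mul_cancel₀ _ (hh0 m hm.1).ne').symm
      _ ≤ C * h t := mul_le_mul (le_max_right _ _) (hmin ⟨ht, htT⟩) (hh0 m hm.1).le hC.le
  refine ⟨C, hC, fun t ht => ?_⟩
  rcases le_total t T with htT | hTt
  · exact hsmall t ⟨ht, htT⟩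
  have hgrowth : c * ∫ s in T..t, f s ≤ h t - h T := by
    rw [← integral_const_mul]
    refine integral_le_sub_of_hasDeriv_right_of_le hTt
      (fun s hs => (hh s (hT0.trans hs.1)).continuousAt.continuousWithinAt)
      (fun s hs => (hh s (hT0.trans hs.1.le)).hasDerivWithinAt) ?_
      (fun s hs => (hT s hs.1.le).1)
    exact (continuousOn_const.mul hf |>.mono fun s hs => hT0.trans hs.1).integrableOn_compact
      isCompact_Icc
  have hint_nonneg : 0 ≤ ∫ s in T..t, f s :=
    integral_nonneg hTt fun s hs => hf0 s (hT0.trans hs.1)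
  calc ∫ s in (0 : ℝ)..t, f s
      = M + ∫ s in T..t, f s :=
        (integral_add_adjacent_intervals (hfint 0 T le_rfl hT0) (hfint T t hT0 ht)).symm
    _ ≤ C * h T + C * (h t - h T) := by
        gcongr
        · exact hsmall T ⟨hT0, le_rfl⟩
        · calc ∫ s in T..t, f s = c⁻¹ * (c * ∫ s in T..t, f s) := by field_simp
            _ ≤ C * (h t - h T) := mul_le_mul (le_max_left _ _) hgrowth (mul_nonneg hc.le hint_nonneg) hC.le
    _ = C * h t := by ring

noncomputable def dampingExponent (μ lam t : ℝ) : ℝ :=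
  μ / (1 - lam) * ((1 + t) ^ (1 - lam) - 1)

theorem dampingExponent_zero (μ lam : ℝ) : dampingExponent μ lam 0 = 0 := by
  simp [dampingExponent]

theorem hasDerivAt_dampingExponent {μ lam t : ℝ} (hlam : lam ≠ 1) (ht : -1 < t) :
    HasDerivAt (dampingExponent μ lam) (μ * (1 + t) ^ (-lam)) t := by
  refine ((((hasDerivAt_id' t).const_add 1).rpow_const (p := 1 - lam)
    (Or.inl (by linarith))).sub_const 1 |>.const_mul (μ / (1 - lam))).congr_deriv ?_
  rw [sub_sub_cancel_left]
  field_simp [sub_ne_zero.2 hlam.symm]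

theorem hasDerivAt_exp_dampingExponent_mul_rpow {μ lam a t : ℝ} (hlam : lam ≠ 1) (ht : -1 < t) :
    HasDerivAt (fun s => exp (dampingExponent μ lam s) * (1 + s) ^ (lam - a))
      (exp (dampingExponent μ lam t) * (1 + t) ^ (-a) * (μ + (lam - a) * (1 + t) ^ (lam - 1)))
      t := by
  have ht' : 0 < 1 + t := by linarith
  refine ((hasDerivAt_dampingExponent (μ := μ) hlam ht).exp.mul
    (((hasDerivAt_id' t).const_add 1).rpow_const (p := lam - a) (Or.inl ht'.ne'))).congr_deriv ?_
  have e1 : (1 + t) ^ (-lam) * (1 + t) ^ (lam - a) = (1 + t) ^ (-a) := by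
    rw [← rpow_add ht']; ring_nf
  have e2 : (1 + t) ^ (-a) * (1 + t) ^ (lam - 1) = (1 + t) ^ (lam - a - 1) := by
    rw [← rpow_add ht']; ring_nf
  linear_combination exp (dampingExponent μ lam t) * (μ * e1 - (lam - a) * e2)

theorem continuousOn_exp_dampingExponent_mul_rpow {μ lam : ℝ} (hlam : lam ≠ 1) (b : ℝ) :
    ContinuousOn (fun s => exp (dampingExponent μ lam s) * (1 + s) ^ b) (Ioi (-1)) :=
  fun s (hs : -1 < s) => ((hasDerivAt_dampingExponent hlam hs).continuousAt.rexp.mul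
    ((continuousAt_const.add continuousAt_id).rpow_const
      (Or.inl (ne_of_gt (show 0 < 1 + s by linarith))))).continuousWithinAt

theorem exists_integral_exp_dampingExponent_mul_rpow_le {μ lam : ℝ} (hlam : lam < 1)
    (hμ : 0 < μ) (a : ℝ) : ∃ C, 0 < C ∧ ∀ t, 0 ≤ t →
      ∫ s in (0 : ℝ)..t, exp (dampingExponent μ lam s) * (1 + s) ^ (-a)
        ≤ C * (exp (dampingExponent μ lam t) * (1 + t) ^ (lam - a)) := by
  have hpos : ∀ s : ℝ, 0 ≤ s → 0 < 1 + s := fun s hs => by linarith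
  have hrate : Tendsto (fun s : ℝ => μ + (lam - a) * (1 + s) ^ (lam - 1)) atTop (𝓝 μ) := by
    have h := (tendsto_rpow_neg_atTop (sub_pos.2 hlam)).comp
      (tendsto_atTop_add_const_left _ 1 tendsto_id)
    simpa [Function.comp_def] using (h.const_mul (lam - a)).const_add μ
  refine exists_integral_le_mul_of_eventually_le_deriv (half_pos hμ) ?_ ?_
    (fun s hs => hasDerivAt_exp_dampingExponent_mul_rpow hlam.ne (by linarith))
    (fun s hs => by have := hpos s hs; positivity) ?_
  · exact (continuousOn_exp_dampingExponent_mul_rpow hlam.ne _).mono fun s (hs : 0 ≤ s) =>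
      show -1 < s by linarith
  · exact fun s hs => by have := hpos s hs; positivity
  · filter_upwards [hrate.eventually_const_le (half_lt_self hμ), eventually_ge_atTop 0]
      with s hs hs0
    have := hpos s hs0
    rw [mul_comm]
    gcongr

theorem stmt_19_general (lam μ a G : ℝ) (hlam1 : lam < 1) (hμ : 0 < μ)
    (hG : 0 ≤ G)
    (y g : ℝ → ℝ) (y₀ : ℝ) (hy : ContDiff ℝ 1 y) (hg : Continuous g)
    (hy0 : y 0 = y₀)
    (hode : ∀ t : ℝ, 0 ≤ t → deriv y t + μ * (1 + t) ^ (-lam) * y t = g t)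
    (hgbd : ∀ t : ℝ, 0 ≤ t → |g t| ≤ G * (1 + t) ^ (-a)) :
    ∃ C : ℝ, 0 < C ∧ ∀ t : ℝ, 0 ≤ t →
      |y t| ≤ |y₀| * Real.exp (-(μ / (1 - lam)) * ((1 + t) ^ (1 - lam) - 1))
        + C * G * (1 + t) ^ (-a + lam) := by
  obtain ⟨C, hC, hweight⟩ := exists_integral_exp_dampingExponent_mul_rpow_le hlam1 hμ a
  refine ⟨C, hC, fun t ht => ?_⟩
  have hmem : ∀ s ∈ Icc 0 t, -1 < s := fun s hs => by linarith [hs.1]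
  have hbound := exp_mul_abs_le_add_integral ht
    (fun s hs => hasDerivAt_dampingExponent hlam1.ne (hmem s hs))
    (fun s hs => by
      rw [← hode s hs.1, add_sub_cancel_right]
      exact (hy.differentiable one_ne_zero s).hasDerivAt)
    hg.continuousOn (fun s hs => hgbd s hs.1)
    (((continuousOn_exp_dampingExponent_mul_rpow hlam1.ne _).mono hmem).intervalIntegrable_of_Icc
      ht)
  rw [dampingExponent_zero, exp_zero, one_mul, hy0] at hbound
  grw [hweight t ht] at hbound
  have hE := exp_pos (dampingExponent μ lam t)
  have hdecay : exp (-(μ / (1 - lam)) * ((1 + t) ^ (1 - lam) - 1))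
      = (exp (dampingExponent μ lam t))⁻¹ := by
    rw [← exp_neg, dampingExponent, neg_mul]
  rw [hdecay, ← div_eq_mul_inv, div_add' _ _ _ hE.ne', le_div_iff₀ hE, neg_add_eq_sub]
  linarith

/-- Exponentially weighted Gronwall-type decay for a damped scalar ODE. -/
theorem stmt_19 (lam μ a G : ℝ) (hlam0 : 0 < lam) (hlam1 : lam < 1) (hμ : 0 < μ)
    (hG : 0 ≤ G)
    (y g : ℝ → ℝ) (y₀ : ℝ) (hy : ContDiff ℝ 1 y) (hg : Continuous g)
    (hy0 : y 0 = y₀)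
    (hode : ∀ t : ℝ, 0 ≤ t → deriv y t + μ * (1 + t) ^ (-lam) * y t = g t)
    (hgbd : ∀ t : ℝ, 0 ≤ t → |g t| ≤ G * (1 + t) ^ (-a)) :
    ∃ C : ℝ, 0 < C ∧ ∀ t : ℝ, 0 ≤ t →
      |y t| ≤ |y₀| * Real.exp (-(μ / (1 - lam)) * ((1 + t) ^ (1 - lam) - 1))
        + C * G * (1 + t) ^ (-a + lam) :=
  stmt_19_general lam μ a G hlam1 hμ hG y g y₀ hy hg hy0 hode hgbd
end
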